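/- arXiv:2508.21629 — 6 statements merged into one kernel-verified Lean document; each statement's English description precedes it below -/
import Mathlib

section
/- Let K be a field and let H be an n×n matrix over K[x] in triangular Smith normal form. Then there exists an n×n matrix W over K[x] with det W = 1 such that H·W is the diagonal matrix whose diagonal entries are H₁₁, …, Hₙₙ. (A triangular Smith normal form is column equivalent to the diagonal matrix with the same diagonal entries, its Smith normal form.) -/
open Polynomial

/-- A square matrix `H` over `K[x]` is in Hermite normal form if it is upper triangular,
its diagonal entries are monic, and each off-diagonal entry lying in a column whose
diagonal entry is nonzero has degree strictly less than that diagonal entry. -/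
def IsHermiteNormalForm {K : Type*} [Field K] {n : ℕ}
    (H : Matrix (Fin n) (Fin n) (Polynomial K)) : Prop :=
  (∀ i j : Fin n, j < i → H i j = 0) ∧
  (∀ i : Fin n, (H i i).Monic) ∧
  (∀ i j : Fin n, i ≠ j → H j j ≠ 0 → (H i j).degree < (H j j).degree)

/-- `H` is in triangular Smith normal form if it is in Hermite normal form and each
diagonal entry `H i i` divides every entry `H k l` with `k ≥ i` and `l ≥ i`. -/
def IsTriangularSmithForm {K : Type*} [Field K] {n : ℕ}
    (H : Matrix (Fin n) (Fin n) (Polynomial K)) : Prop :=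
  IsHermiteNormalForm H ∧
  ∀ i k l : Fin n, i ≤ k → i ≤ l → H i i ∣ H k l

theorem triangularSmith_column_equivalent_to_diagonal
    {K : Type*} [Field K] {n : ℕ}
    (H : Matrix (Fin n) (Fin n) (Polynomial K))
    (hH : IsTriangularSmithForm H) :
    ∃ W : Matrix (Fin n) (Fin n) (Polynomial K),
      W.det = 1 ∧ H * W = Matrix.diagonal (fun i => H i i) := by
  obtain ⟨⟨htri, hmon, _⟩, hdvd⟩ := hH
  have hne : ∀ i, H i i ≠ 0 := fun i => (hmon i).ne_zero
  set Q : Matrix (Fin n) (Fin n) (Polynomial K) := fun i j => H i j / H i i with hQdef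
  have hQlow : ∀ i j : Fin n, j < i → Q i j = 0 := by
    intro i j h
    simp [hQdef, htri i j h]
  have hQdiag : ∀ i : Fin n, Q i i = 1 := by
    intro i
    simp only [hQdef]
    exact EuclideanDomain.div_self (hne i)
  have hHDQ : H = Matrix.diagonal (fun i => H i i) * Q := by
    refine Matrix.ext fun i j => ?_
    rw [Matrix.diagonal_mul]
    rcases lt_or_ge j i with h | h
    · simp [htri i j h, hQlow i j h]
    · simp only [hQdef]
      exact (EuclideanDomain.mul_div_cancel' (hne i) (hdvd i i j le_rfl h)).symm
  have hQtri : Q.BlockTriangular id := fun i j h => hQlow i j h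
  have hQdet : Q.det = 1 := by
    rw [Matrix.det_of_upperTriangular hQtri]
    simp [hQdiag]
  refine ⟨Q.adjugate, ?_, ?_⟩
  · rw [Matrix.det_adjugate, hQdet, one_pow]
  · conv_lhs => rw [hHDQ, Matrix.mul_assoc, Matrix.mul_adjugate, hQdet, one_smul, Matrix.mul_one]
end

section
/- Let K be a field and let H be an n×n matrix over K[x] with det H ≠ 0 which is in Hermite normal form. Then the following are equivalent: (1) for each index i, the diagonal entry H_{i,i} divides every entry H_{k,l} with k ≥ i and l ≥ i (i.e., H is in triangular Smith normal form); (2) for each i with 1 ≤ i ≤ n, the greatest common divisor of the i×i minors of the submatrix consisting of the leading i columns of H is associated (equal up to a unit of K[x]) to the greatest common divisor of all i×i minors of H. -/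
/-!
For an upper triangular `H` write `dᵢ = H₀₀ ⋯ H_{i-1,i-1}`. Rows `≥ i` of the leading `i`
columns vanish, so every minor on those columns is a multiple of the leading principal minor
`dᵢ`, which is therefore their gcd. If `H` is in triangular Smith form, the diagonal is a
divisibility chain and each nonzero term of the Leibniz expansion of an `i × i` minor is a
multiple of `dᵢ`, so `dᵢ` is also the gcd of all `i × i` minors. Conversely, the minor on rows
`0, …, i-1, k` and columns `0, …, i-1, l` is triangular with determinant `dᵢ H_{kl}`;
divisibility by `d_{i+1} = dᵢ Hᵢᵢ` and cancelling `dᵢ ≠ 0` give `Hᵢᵢ ∣ H_{kl}`.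
-/

open Polynomial

/-- A gcd (well defined up to associates) of a list of polynomials over a field. -/
noncomputable def polyListGcd {K : Type*} [Field K] (l : List (Polynomial K)) : Polynomial K :=
  letI : DecidableEq (Polynomial K) := Classical.decEq _
  l.foldr EuclideanDomain.gcd 0

/-- The gcd (up to associates) of all `i × i` minors of an `n × n` matrix `H`, computed
as the gcd over all row- and column-selection functions of the determinant of the
corresponding `i × i` submatrix.  (Selections that are not injective contribute a zero
determinant, and reorderings only change the sign, so this is associated to the gcd of
the `i × i` minors in the usual sense.) -/
noncomputable def gcdMinors {K : Type*} [Field K] {n : ℕ}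
    (H : Matrix (Fin n) (Fin n) (Polynomial K)) (i : ℕ) : Polynomial K :=
  polyListGcd
    (((Finset.univ : Finset ((Fin i → Fin n) × (Fin i → Fin n)))).toList.map
      (fun p => (H.submatrix p.1 p.2).det))

/-- The gcd (up to associates) of all `i × i` minors of `H` lying in the leading `i`
columns of `H`, for `i ≤ n`: the selected columns are exactly the first `i` columns. -/
noncomputable def gcdLeadingMinors {K : Type*} [Field K] {n : ℕ}
    (H : Matrix (Fin n) (Fin n) (Polynomial K)) (i : ℕ) (hi : i ≤ n) : Polynomial K :=
  polyListGcd
    (((Finset.univ : Finset (Fin i → Fin n))).toList.map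
      (fun r => (H.submatrix r (Fin.castLE hi)).det))


theorem Fin.val_le_of_strictMono {m n : ℕ} {g : Fin m → Fin n} (hg : StrictMono g) (a : Fin m) :
    (a : ℕ) ≤ g a := by
  obtain ⟨a, ha⟩ := a
  induction a with
  | zero => exact Nat.zero_le _
  | succ b ih =>
    have hlt : g ⟨b, by omega⟩ < g ⟨b + 1, ha⟩ := hg (Fin.mk_lt_mk.mpr b.lt_succ_self)
    exact (ih (by omega)).trans_lt hlt

theorem Fin.prod_castLE_dvd_prod_of_injective {M : Type*} [CommMonoid M] {n i : ℕ}
    {f : Fin n → M} (hf : ∀ a b, a ≤ b → f a ∣ f b) (hi : i ≤ n) {r : Fin i → Fin n}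
    (hr : r.Injective) : ∏ a, f (Fin.castLE hi a) ∣ ∏ a, f (r a) := by
  classical
  set s := Finset.univ.image r
  have hcard : s.card = i := by simp [s, Finset.card_image_of_injective _ hr]
  set g := s.orderEmbOfFin hcard
  have hr_prod : ∏ x ∈ s, f x = ∏ a, f (r a) := Finset.prod_image fun x _ y _ h => hr h
  have hg_prod : ∏ x ∈ s, f x = ∏ a, f (g a) := by
    conv_lhs => rw [← s.image_orderEmbOfFin_univ hcard]
    exact Finset.prod_image fun x _ y _ h => g.injective h
  rw [← hr_prod, hg_prod]
  exact Finset.prod_dvd_prod_of_dvd _ _ fun a _ =>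
    hf _ _ (Fin.le_def.mpr (Fin.val_le_of_strictMono g.strictMono a))

namespace Matrix

section CommMonoid

variable {R : Type*} [CommMonoid R] {n : ℕ}

def leadingDiagProd (A : Matrix (Fin n) (Fin n) R) {i : ℕ} (hi : i ≤ n) : R :=
  ∏ a : Fin i, A.diag (Fin.castLE hi a)

theorem leadingDiagProd_succ (A : Matrix (Fin n) (Fin n) R) {i : ℕ} (hi : i + 1 ≤ n) :
    A.leadingDiagProd hi = A.leadingDiagProd (Nat.le_of_succ_le hi) * A ⟨i, hi⟩ ⟨i, hi⟩ :=
  Fin.prod_univ_castSucc _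

end CommMonoid

variable {R : Type*} [CommRing R] {n : ℕ} {A : Matrix (Fin n) (Fin n) R}

theorem IsUpperTriangular.det_submatrix_castLE (hA : A.IsUpperTriangular) {i : ℕ} (hi : i ≤ n) :
    (A.submatrix (Fin.castLE hi) (Fin.castLE hi)).det = A.leadingDiagProd hi :=
  det_of_isUpperTriangular fun _ _ h => hA h

theorem IsUpperTriangular.det_submatrix_castLE_right (hA : A.IsUpperTriangular) {i : ℕ}
    (hi : i ≤ n) (r : Fin i → Fin n) :
    (A.submatrix r (Fin.castLE hi)).det =
      ((1 : Matrix (Fin n) (Fin n) R).submatrix r (Fin.castLE hi)).det * A.leadingDiagProd hi := by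
  have hfactor : A.submatrix r (Fin.castLE hi) =
      (1 : Matrix (Fin n) (Fin n) R).submatrix r (Fin.castLE hi) *
        A.submatrix (Fin.castLE hi) (Fin.castLE hi) := by
    ext a b
    simp only [submatrix_apply, mul_apply, one_apply, ite_mul, one_mul, zero_mul]
    by_cases hra : (r a : ℕ) < i
    · set x : Fin i := ⟨r a, hra⟩
      rw [show r a = Fin.castLE hi x from rfl]
      simp [Fin.castLE_inj]
    · have hne : ∀ x : Fin i, r a ≠ Fin.castLE hi x := fun x h => hra (h ▸ x.isLt)
      simp only [hne, if_false, Finset.sum_const_zero]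
      exact hA (Fin.lt_def.mpr ((b.isLt).trans_le (not_lt.mp hra)))
  rw [hfactor, det_mul, hA.det_submatrix_castLE]

theorem IsUpperTriangular.leadingDiagProd_dvd_det_submatrix (hA : A.IsUpperTriangular)
    (hdvd : ∀ a k l, a ≤ k → a ≤ l → A a a ∣ A k l) {i : ℕ} (hi : i ≤ n) (r c : Fin i → Fin n) :
    A.leadingDiagProd hi ∣ (A.submatrix r c).det := by
  classical
  by_cases hr : r.Injective
  swap
  · obtain ⟨a, b, hab, hne⟩ := Function.not_injective_iff.mp hr
    rw [det_zero_of_row_eq hne (by ext; simp [hab])]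
    exact dvd_zero _
  have hdiag : A.leadingDiagProd hi ∣ ∏ a, A (r a) (r a) :=
    Fin.prod_castLE_dvd_prod_of_injective (fun a b h => hdvd a b b h h) hi hr
  rw [det_apply]
  refine Finset.dvd_sum fun σ _ => ?_
  have hterm : ∏ a, A (r a) (r a) ∣ ∏ a, A (r (σ a)) (c a) := by
    rw [← Equiv.prod_comp σ (fun a => A (r a) (r a))]
    refine Finset.prod_dvd_prod_of_dvd _ _ fun a _ => ?_
    rcases le_or_gt (r (σ a)) (c a) with h | h
    · exact hdvd _ _ _ le_rfl h
    · rw [hA h]; exact dvd_zero _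
  rw [Units.smul_def, zsmul_eq_mul]
  exact (hdiag.trans hterm).mul_left _

theorem IsUpperTriangular.det_submatrix_snoc (hA : A.IsUpperTriangular) {i : ℕ} (hi : i ≤ n)
    (k l : Fin n) (hk : i ≤ k) :
    (A.submatrix (Fin.snoc (Fin.castLE hi) k : Fin (i + 1) → Fin n)
      (Fin.snoc (Fin.castLE hi) l : Fin (i + 1) → Fin n)).det = A.leadingDiagProd hi * A k l := by
  rw [det_of_isUpperTriangular, Fin.prod_univ_castSucc]
  · simp [leadingDiagProd]
  intro a b hab
  induction b using Fin.lastCases with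
  | last => exact absurd hab (not_lt.mpr (Fin.le_last a))
  | cast b =>
    induction a using Fin.lastCases with
    | last =>
      simp only [submatrix_apply, Fin.snoc_castSucc, Fin.snoc_last]
      exact hA (Fin.lt_def.mpr (b.isLt.trans_le hk))
    | cast a =>
      simp only [submatrix_apply, Fin.snoc_castSucc]
      exact hA (Fin.castSucc_lt_castSucc_iff.mp hab)

end Matrix

section Gcd

variable {K : Type*} [Field K] {n : ℕ}

theorem polyListGcd_dvd {l : List K[X]} {p : K[X]} (hp : p ∈ l) : polyListGcd l ∣ p := by
  let : DecidableEq K[X] := Classical.decEq _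
  unfold polyListGcd
  induction l with
  | nil => simp at hp
  | cons q l ih =>
    rcases List.mem_cons.mp hp with rfl | hp
    · exact EuclideanDomain.gcd_dvd_left _ _
    · exact (EuclideanDomain.gcd_dvd_right _ _).trans (ih hp)

theorem dvd_polyListGcd {l : List K[X]} {d : K[X]} (hd : ∀ p ∈ l, d ∣ p) :
    d ∣ polyListGcd l := by
  let : DecidableEq K[X] := Classical.decEq _
  unfold polyListGcd
  induction l with
  | nil => exact dvd_zero d
  | cons q l ih =>
    exact EuclideanDomain.dvd_gcd (hd q List.mem_cons_self)
      (ih fun p hp => hd p (List.mem_cons_of_mem q hp))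

theorem polyListGcd_associated_of_mem {l : List K[X]} {d : K[X]} (hd : d ∈ l)
    (hdvd : ∀ p ∈ l, d ∣ p) : Associated (polyListGcd l) d :=
  associated_of_dvd_dvd (polyListGcd_dvd hd) (dvd_polyListGcd hdvd)

theorem gcdMinors_dvd_det_submatrix (H : Matrix (Fin n) (Fin n) K[X]) {i : ℕ}
    (r c : Fin i → Fin n) : gcdMinors H i ∣ (H.submatrix r c).det :=
  polyListGcd_dvd (List.mem_map.mpr ⟨(r, c), Finset.mem_toList.mpr (Finset.mem_univ _), rfl⟩)

variable {H : Matrix (Fin n) (Fin n) K[X]}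

theorem Matrix.IsUpperTriangular.gcdLeadingMinors_associated (hH : H.IsUpperTriangular) {i : ℕ}
    (hi : i ≤ n) : Associated (gcdLeadingMinors H i hi) (H.leadingDiagProd hi) := by
  refine polyListGcd_associated_of_mem (List.mem_map.mpr ⟨Fin.castLE hi, by simp,
    hH.det_submatrix_castLE hi⟩) ?_
  simp only [List.mem_map, forall_exists_index, and_imp]
  rintro _ r - rfl
  rw [hH.det_submatrix_castLE_right hi r]
  exact dvd_mul_left _ _

theorem Matrix.IsUpperTriangular.gcdMinors_associated (hH : H.IsUpperTriangular)
    (hdvd : ∀ a k l, a ≤ k → a ≤ l → H a a ∣ H k l) {i : ℕ} (hi : i ≤ n) :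
    Associated (gcdMinors H i) (H.leadingDiagProd hi) := by
  refine polyListGcd_associated_of_mem (List.mem_map.mpr ⟨(Fin.castLE hi, Fin.castLE hi), by simp,
    hH.det_submatrix_castLE hi⟩) ?_
  simp only [List.mem_map, forall_exists_index, and_imp]
  rintro _ p - rfl
  exact hH.leadingDiagProd_dvd_det_submatrix hdvd hi p.1 p.2

theorem Matrix.IsUpperTriangular.diag_dvd_of_associated_gcdLeadingMinors
    (hH : H.IsUpperTriangular) (hdiag : ∀ a, H a a ≠ 0) {i k : Fin n} (hik : i ≤ k) (l : Fin n)
    (hgcd : Associated (gcdLeadingMinors H (i + 1) i.isLt) (gcdMinors H (i + 1))) :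
    H i i ∣ H k l := by
  have hi : (i : ℕ) ≤ n := i.isLt.le
  have hprefix : H.leadingDiagProd hi ≠ 0 :=
    Finset.prod_ne_zero_iff.mpr fun a _ => hdiag _
  have hminor : H.leadingDiagProd i.isLt ∣ H.leadingDiagProd hi * H k l := by
    rw [← hH.det_submatrix_snoc hi k l hik]
    exact (hH.gcdLeadingMinors_associated i.isLt).symm.dvd.trans <| hgcd.dvd.trans <|
      gcdMinors_dvd_det_submatrix H _ _
  rwa [leadingDiagProd_succ, mul_dvd_mul_iff_left hprefix] at hminor

end Gcd

theorem triangularSmith_iff_gcd_leading_minors_general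
    {K : Type*} [Field K] {n : ℕ}
    (H : Matrix (Fin n) (Fin n) (Polynomial K))
    (hHermite : IsHermiteNormalForm H) :
    (∀ i k l : Fin n, i ≤ k → i ≤ l → H i i ∣ H k l) ↔
      (∀ (i : ℕ) (h1 : 1 ≤ i) (hn : i ≤ n),
        Associated (gcdLeadingMinors H i hn) (gcdMinors H i)) := by
  obtain ⟨htri, hmonic, -⟩ := hHermite
  have hH : H.IsUpperTriangular := fun i j h => htri i j h
  constructor
  · intro hSmith i _ hi
    exact (hH.gcdLeadingMinors_associated hi).trans (hH.gcdMinors_associated hSmith hi).symm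
  · intro hgcd i k l hik _
    exact hH.diag_dvd_of_associated_gcdLeadingMinors (fun a => (hmonic a).ne_zero) hik l
      (hgcd (i + 1) (Nat.succ_pos i) i.isLt)

theorem triangularSmith_iff_gcd_leading_minors
    {K : Type*} [Field K] {n : ℕ}
    (H : Matrix (Fin n) (Fin n) (Polynomial K))
    (hdet : H.det ≠ 0)
    (hHermite : IsHermiteNormalForm H) :
    (∀ i k l : Fin n, i ≤ k → i ≤ l → H i i ∣ H k l) ↔
      (∀ (i : ℕ) (h1 : 1 ≤ i) (hn : i ≤ n),
        Associated (gcdLeadingMinors H i hn) (gcdMinors H i)) :=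
  triangularSmith_iff_gcd_leading_minors_general H hHermite
end

section
/- Let K be a field and let s₁, …, sₙ be monic polynomials in K[x] with s_i dividing s_{i+1} for 1 ≤ i < n, and set s₀ = 1. Let k be the number of indices i ∈ {1, …, n} such that the radical (squarefree part) of s_i is not associated to the radical of s_{i−1}. Then k·(k+1) ≤ 2·deg(s₁·s₂⋯sₙ). (Hence the number of such ramification indices is at most √(2d), where d is the degree of the product of the invariants.) -/
open Polynomial

/-- Two nonzero polynomials have associated radicals (squarefree parts) exactly when
they have the same prime (irreducible) divisors. -/
def SamePrimeFactors {K : Type*} [Field K] (a b : Polynomial K) : Prop :=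
  ∀ p : Polynomial K, Prime p → (p ∣ a ↔ p ∣ b)

/-!
Let `t₁ < ⋯ < t_k` be the indices at which the set of prime factors changes. Along the
divisibility chain the set of prime factors only grows, and at each `tⱼ` it gains a new
element, so `s_{tⱼ}` has at least `j` distinct prime factors and hence degree at least `j`.
Summing over `j` gives `k(k+1)/2 ≤ ∑ deg sᵢ = deg ∏ sᵢ`.
-/

open Finset UniqueFactorizationMonoid

theorem Finset.two_mul_sum_card_filter_le {α : Type*} [LinearOrder α] (T : Finset α) :
    2 * ∑ i ∈ T, #{j ∈ T | j ≤ i} = #T * (#T + 1) := by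
  induction T using Finset.induction_on_max with
  | empty => simp
  | insert a T hlt ih =>
    have ha : a ∉ T := fun ha => lt_irrefl a (hlt a ha)
    have hbelow : ∀ i ∈ T, {j ∈ insert a T | j ≤ i} = {j ∈ T | j ≤ i} := fun i hi => by
      rw [filter_insert, if_neg (hlt i hi).not_ge]
    have htop : {j ∈ insert a T | j ≤ a} = insert a T :=
      filter_true_of_mem fun j hj => (mem_insert.mp hj).elim le_of_eq fun h => (hlt j h).le
    rw [sum_insert ha, htop, sum_congr rfl fun i hi => by rw [hbelow i hi],
      card_insert_of_notMem ha]
    linarith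

theorem Nat.card_filter_le_le_of_lt_succ {c : ℕ → ℕ} {T : Finset ℕ} {n : ℕ} (hT0 : 0 ∉ T)
    (hmono : ∀ i < n, c i ≤ c (i + 1)) (hstrict : ∀ i < n, i + 1 ∈ T → c i < c (i + 1)) :
    ∀ i ≤ n, #{j ∈ T | j ≤ i} ≤ c i := by
  intro i
  induction i with
  | zero =>
    intro _
    rw [filter_eq_empty_iff.mpr fun j hj hj0 => hT0 (Nat.le_zero.mp hj0 ▸ hj), card_empty]
    exact Nat.zero_le _
  | succ i ih =>
    intro hi
    have hi' : i < n := hi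
    by_cases hT : i + 1 ∈ T
    · have hsplit : {j ∈ T | j ≤ i + 1} ⊆ insert (i + 1) {j ∈ T | j ≤ i} := by
        intro j hj
        simp only [mem_filter, mem_insert] at hj ⊢
        exact (Nat.le_succ_iff.mp hj.2).symm.imp id (⟨hj.1, ·⟩)
      calc #{j ∈ T | j ≤ i + 1} ≤ #{j ∈ T | j ≤ i} + 1 :=
            (card_le_card hsplit).trans (card_insert_le _ _)
        _ ≤ c (i + 1) := (ih hi'.le).trans_lt (hstrict i hi' hT)
    · have hsub : {j ∈ T | j ≤ i + 1} ⊆ {j ∈ T | j ≤ i} := by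
        intro j hj
        simp only [mem_filter] at hj ⊢
        refine ⟨hj.1, (Nat.le_succ_iff.mp hj.2).resolve_right ?_⟩
        rintro rfl
        exact hT hj.1
      exact (card_le_card hsub).trans ((ih hi'.le).trans (hmono i hi'))

theorem UniqueFactorizationMonoid.primeFactors_subset_of_dvd {M : Type*}
    [CommMonoidWithZero M] [NormalizationMonoid M] [UniqueFactorizationMonoid M]
    {a b : M} (hab : a ∣ b) (hb : b ≠ 0) : primeFactors a ⊆ primeFactors b :=
  radical_dvd_radical_iff_primeFactors_subset_primeFactors.mp (radical_dvd_radical hab hb)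

section Polynomial

variable {K : Type*} [Field K] [DecidableEq K]

theorem SamePrimeFactors.of_radical_eq {a b : K[X]} (ha : a ≠ 0) (hb : b ≠ 0)
    (h : radical a = radical b) : SamePrimeFactors a b := fun p hp => by
  rw [← dvd_radical_iff_of_irreducible hp.irreducible ha, h,
    dvd_radical_iff_of_irreducible hp.irreducible hb]

theorem Polynomial.card_primeFactors_lt_of_dvd {a b : K[X]} (hab : a ∣ b) (hb : b ≠ 0)
    (hchange : ¬ SamePrimeFactors b a) : #(primeFactors a) < #(primeFactors b) := by
  refine card_lt_card <| (primeFactors_subset_of_dvd hab hb).ssubset_of_ne fun h => hchange ?_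
  exact .of_radical_eq hb (ne_zero_of_dvd_ne_zero hb hab)
    (radical_eq_iff_primeFactors_eq.mpr h.symm)

theorem Polynomial.card_primeFactors_le_natDegree (a : K[X]) :
    #(primeFactors a) ≤ a.natDegree := by
  have hprime : ∀ p ∈ primeFactors a, Prime p := fun p hp =>
    prime_of_normalized_factor p (mem_primeFactors.mp hp)
  calc #(primeFactors a) = ∑ p ∈ primeFactors a, 1 := card_eq_sum_ones _
    _ ≤ ∑ p ∈ primeFactors a, p.natDegree := sum_le_sum fun p hp =>
        natDegree_pos_iff_degree_pos.mpr (degree_pos_of_irreducible (hprime p hp).irreducible)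
    _ = (radical a).natDegree :=
        (natDegree_prod _ _ fun p hp => (hprime p hp).ne_zero).symm
    _ ≤ a.natDegree := natDegree_radical_le

end Polynomial

/-- For a divisibility chain `s₁ ∣ s₂ ∣ ⋯ ∣ sₙ` of monic polynomials (with `s₀ = 1`),
if `k` is the number of indices `i` where the squarefree part of `s i` is not
associated to the squarefree part of `s (i-1)` (i.e. where the set of prime factors
changes), then `k·(k+1) ≤ 2·deg(s₁⋯sₙ)`; hence `k ≤ √(2d)` where `d` is the degree of
the product of the invariants. -/
theorem ramification_count_bound
    {K : Type*} [Field K] (n : ℕ) (s : ℕ → Polynomial K)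
    (hs0 : s 0 = 1)
    (hmonic : ∀ i, 1 ≤ i → i ≤ n → (s i).Monic)
    (hdvd : ∀ i, 1 ≤ i → i < n → s i ∣ s (i + 1))
    (k : ℕ)
    (hk : k = Set.ncard {i : ℕ | 1 ≤ i ∧ i ≤ n ∧ ¬ SamePrimeFactors (s i) (s (i - 1))}) :
    k * (k + 1) ≤ 2 * (∏ i ∈ Finset.Icc 1 n, s i).natDegree := by
  classical
  have hne : ∀ i ≤ n, s i ≠ 0 := fun i hi => by
    rcases i.eq_zero_or_pos with rfl | hpos
    exacts [hs0 ▸ one_ne_zero, (hmonic i hpos hi).ne_zero]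
  have hchain : ∀ i < n, s i ∣ s (i + 1) := fun i hi => by
    rcases i.eq_zero_or_pos with rfl | hpos
    exacts [hs0 ▸ one_dvd _, hdvd i hpos hi]
  set T := {i ∈ Icc 1 n | ¬ SamePrimeFactors (s i) (s (i - 1))} with hT
  have hkT : k = #T := by
    rw [hk, ← Set.ncard_coe_finset]
    congr 1
    ext i
    simp [hT, and_assoc]
  have hcount : ∀ i ≤ n, #{j ∈ T | j ≤ i} ≤ #(primeFactors (s i)) :=
    Nat.card_filter_le_le_of_lt_succ (by simp [hT])
      (fun i hi => card_le_card (primeFactors_subset_of_dvd (hchain i hi) (hne (i + 1) hi)))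
      (fun i hi hiT => card_primeFactors_lt_of_dvd (hchain i hi) (hne (i + 1) hi)
        (by simp only [hT, mem_filter] at hiT; simpa using hiT.2))
  calc k * (k + 1) = 2 * ∑ i ∈ T, #{j ∈ T | j ≤ i} := by rw [hkT, two_mul_sum_card_filter_le]
    _ ≤ 2 * ∑ i ∈ T, (s i).natDegree := by
        gcongr with i hi
        have hin : i ≤ n := (mem_Icc.mp (mem_filter.mp hi).1).2
        exact (hcount i hin).trans (card_primeFactors_le_natDegree _)
    _ ≤ 2 * ∑ i ∈ Icc 1 n, (s i).natDegree := by gcongr; exact filter_subset _ _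
    _ = 2 * (∏ i ∈ Icc 1 n, s i).natDegree := by
        rw [natDegree_prod_of_monic _ _ fun i hi => hmonic i (mem_Icc.mp hi).1 (mem_Icc.mp hi).2]
end

section
/- Let K be a field and let A be an n×n matrix over K[x] with det A ≠ 0, all of whose entries have degree at most d. Let U be the unique unimodular matrix over K[x] such that H = U·A is in Hermite normal form. Then every entry of U has degree at most (n−1)·d, and every entry of H has degree at most n·d. -/
open Polynomial

lemma det_natDegree_le_sum {K : Type*} [Field K] {n : ℕ}
    (M : Matrix (Fin n) (Fin n) (Polynomial K)) (b : Fin n → ℕ)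
    (h : ∀ i j, (M i j).natDegree ≤ b i) :
    M.det.natDegree ≤ ∑ i, b i := by
  rw [Matrix.det_apply']
  refine Polynomial.natDegree_sum_le_of_forall_le _ _ (fun σ _ => ?_)
  refine (Polynomial.natDegree_mul_le).trans ?_
  have h1 : ((Equiv.Perm.sign σ : ℤ) : Polynomial K).natDegree = 0 := natDegree_intCast _
  rw [h1, zero_add]
  refine (Polynomial.natDegree_prod_le _ _).trans ?_
  calc ∑ i, (M (σ i) i).natDegree ≤ ∑ i, b (σ i) :=
        Finset.sum_le_sum (fun i _ => h _ _)
    _ = ∑ i, b i := Equiv.sum_comp σ b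

/-- Degree bounds for the Hermite normal form `H = U·A` of a nonsingular matrix `A`
over `K[x]` with entries of degree at most `d`: the entries of the unimodular cofactor
`U` have degree at most `(n-1)·d` and those of `H` have degree at most `n·d`. -/
theorem hermite_cofactor_degree_bounds
    {K : Type*} [Field K] {n : ℕ}
    (A U H : Matrix (Fin n) (Fin n) (Polynomial K)) (d : ℕ)
    (hA : A.det ≠ 0)
    (hAdeg : ∀ i j, (A i j).natDegree ≤ d)
    (hU : IsUnit U.det)
    (hUA : H = U * A)
    (hHermite : IsHermiteNormalForm H) :
    (∀ i j, (U i j).natDegree ≤ (n - 1) * d) ∧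
    (∀ i j, (H i j).natDegree ≤ n * d) := by
  obtain ⟨hupper, hmonic, hlt⟩ := hHermite
  set D := A.det.natDegree with hD
  -- det A has degree ≤ n*d
  have hDnd : D ≤ n * d := by
    have := det_natDegree_le_sum A (fun _ => d) (fun i j => hAdeg i j)
    simpa [Finset.sum_const, Finset.card_univ, mul_comm] using this
  -- det H = ∏ H i i
  have hdetH : H.det = ∏ i, H i i :=
    Matrix.det_of_upperTriangular (fun i j hij => hupper i j hij)
  have hdetHU : H.det = U.det * A.det := by rw [hUA, Matrix.det_mul]
  have hUdet0 : (U.det).natDegree = 0 := natDegree_eq_zero_of_isUnit hU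
  have hprodD : (∏ i, H i i).natDegree = D := by
    rw [← hdetH, hdetHU, natDegree_mul hU.ne_zero hA, hUdet0, zero_add]
  have hdiag : ∀ k : Fin n, (H k k).natDegree ≤ D := by
    intro k
    rw [← hprodD, natDegree_prod _ _ (fun j _ => (hmonic j).ne_zero)]
    exact Finset.single_le_sum (f := fun j => (H j j).natDegree)
      (fun j _ => Nat.zero_le _) (Finset.mem_univ k)
  have hHle : ∀ i k : Fin n, (H i k).natDegree ≤ (H k k).natDegree := by
    intro i k
    rcases eq_or_ne i k with rfl | hne
    · exact le_rfl
    · exact natDegree_le_natDegree (le_of_lt (hlt i k hne (hmonic k).ne_zero))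
  have hHD : ∀ i k : Fin n, (H i k).natDegree ≤ D :=
    fun i k => (hHle i k).trans (hdiag k)
  -- adjugate entries
  have hadj : ∀ k j : Fin n, ((A.adjugate) k j).natDegree ≤ (n - 1) * d := by
    intro k j
    rw [Matrix.adjugate_apply]
    have := det_natDegree_le_sum (A.updateRow j (Pi.single k 1))
      (fun i => if i = j then 0 else d) ?_
    · refine this.trans (le_of_eq ?_)
      rw [← Finset.sum_subset (Finset.subset_univ ({j}ᶜ : Finset (Fin n)))]
      · rw [Finset.sum_congr rfl (fun x hx => if_neg (by simpa using hx))]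
        simp [Finset.card_compl, Finset.card_univ]
      · intro x _ hx
        simp at hx
        simp [hx]
    · intro i l
      rw [Matrix.updateRow_apply]
      rcases eq_or_ne i j with rfl | hij
      · simp only [if_pos rfl]
        rcases eq_or_ne l k with rfl | hlk <;> simp [Pi.single_apply, *]
      · simp only [if_neg hij]
        exact hAdeg i l
  -- key identity : A.det • U = H * A.adjugate
  have key : A.det • U = H * A.adjugate := by
    rw [hUA, Matrix.mul_assoc, Matrix.mul_adjugate, Matrix.mul_smul, Matrix.mul_one]
  have hUbound : ∀ i j, (U i j).natDegree ≤ (n - 1) * d := by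
    intro i j
    by_cases hz : U i j = 0
    · simp [hz]
    have hent : A.det * U i j = ∑ k, H i k * A.adjugate k j := by
      have := congrFun (congrFun key i) j
      simpa [Matrix.smul_apply, Matrix.mul_apply, smul_eq_mul] using this
    have hrhs : (∑ k, H i k * A.adjugate k j).natDegree ≤ D + (n - 1) * d := by
      refine Polynomial.natDegree_sum_le_of_forall_le _ _ (fun k _ => ?_)
      exact natDegree_mul_le.trans (add_le_add (hHD i k) (hadj k j))
    have hlhs : (A.det * U i j).natDegree = D + (U i j).natDegree :=
      natDegree_mul hA hz
    have : D + (U i j).natDegree ≤ D + (n - 1) * d := by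
      rw [← hlhs, hent]; exact hrhs
    exact le_of_add_le_add_left this
  exact ⟨hUbound, fun i j => (hHD i j).trans hDnd⟩
end

section
/- Let F be a field and let A be an n×n matrix whose entries are polynomials in F[y, x], with degree in x at most d (where d ≥ 1), degree in y at most e, and with det A ≠ 0. View A as a matrix over F(y)[x], where F(y) is the field of rational functions in y, and let U be the unique unimodular matrix over F(y)[x] such that H = U·A is in Hermite normal form. Then for every entry of H and of U, every coefficient (an element of F(y), written in lowest terms as a quotient of polynomials in y) has numerator of degree at most n²·d·e and denominator of degree at most n²·d·e; consequently the least common multiple of all denominators occurring in H and U has degree at most n²·d·e in y. -/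
/-!
Write `B` for `A` over `F(y)[x]`. As `det U` is a unit, the diagonal degrees of `H` add up to
`deg det B ≤ n d`, so every entry of `H` has degree at most `deg det B`, and
`det B • U = H * adj B` bounds the entries of `U` by degree `(n - 1) d`. A row of `U` is then
determined by its `n ((n - 1) d + 1)` coefficients, which solve the linear system over `F[y]`
saying that in column `j` the coefficients of `x ^ k`, `k ≥ deg H_jj`, of the row times `B` are
`0` or `1`, as they are in `H`. Uniqueness of the Hermite reduction makes this system injective,
so it has a nonsingular square subsystem, and Cramer's rule writes every unknown as a polynomial
of degree `≤ n ((n - 1) d + 1) e` over its determinant `Δ`. The coefficients of `H = U * B` are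
combinations of the unknowns with coefficients of degree `≤ e`, hence have the same shape, and
`n ((n - 1) d + 1) ≤ n² d`.
-/

open Polynomial Matrix

namespace Matrix

section Degree

variable {R : Type*} [CommRing R] {m : Type*} [Fintype m] [DecidableEq m]

theorem natDegree_det_le_sum (M : Matrix m m R[X]) (r : m → ℕ)
    (h : ∀ i j, (M i j).natDegree ≤ r i) : M.det.natDegree ≤ ∑ i, r i := by
  rw [det_apply']
  refine natDegree_sum_le_of_forall_le _ _ fun σ _ => natDegree_mul_le.trans ?_
  rw [natDegree_intCast, zero_add]
  refine (natDegree_prod_le _ _).trans ?_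
  calc ∑ i, (M (σ i) i).natDegree ≤ ∑ i, r (σ i) := Finset.sum_le_sum fun i _ => h _ _
    _ = ∑ i, r i := Equiv.sum_comp σ r

theorem natDegree_det_le (M : Matrix m m R[X]) {d : ℕ} (h : ∀ i j, (M i j).natDegree ≤ d) :
    M.det.natDegree ≤ Fintype.card m * d := by
  simpa using M.natDegree_det_le_sum (fun _ => d) h

theorem natDegree_adjugate_le (M : Matrix m m R[X]) {d : ℕ} (h : ∀ i j, (M i j).natDegree ≤ d)
    (i j : m) : (M.adjugate i j).natDegree ≤ (Fintype.card m - 1) * d := by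
  rw [adjugate_apply]
  refine (natDegree_det_le_sum _ (fun l => if l = j then 0 else d) fun l k => ?_).trans ?_
  · rw [updateRow_apply]
    split_ifs
    · rw [Pi.single_apply]
      split_ifs <;> simp
    · exact h l k
  · simp [Finset.sum_ite, Finset.filter_ne', Finset.card_erase_of_mem]

theorem natDegree_apply_le_of_mul_eq [IsDomain R] {U B H : Matrix m m R[X]} (hUB : U * B = H)
    (hB : B.det ≠ 0) {d : ℕ} (hBd : ∀ i j, (B i j).natDegree ≤ d)
    (hH : ∀ i j, (H i j).natDegree ≤ B.det.natDegree) (i j : m) :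
    (U i j).natDegree ≤ (Fintype.card m - 1) * d := by
  by_cases hU : U i j = 0
  · simp [hU]
  have hdet : B.det * U i j = (H * B.adjugate) i j := by
    rw [← hUB, Matrix.mul_assoc, mul_adjugate, Matrix.mul_smul, Matrix.mul_one, smul_apply,
      smul_eq_mul]
  have hle : (B.det * U i j).natDegree ≤ B.det.natDegree + (Fintype.card m - 1) * d := by
    rw [hdet, mul_apply]
    exact natDegree_sum_le_of_forall_le _ _ fun l _ =>
      natDegree_mul_le.trans (add_le_add (hH i l) (B.natDegree_adjugate_le hBd l j))
  rw [natDegree_mul hB hU] at hle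
  omega

end Degree

theorem natDegree_mulVec_le {R κ ι : Type*} [Semiring R] [Fintype ι] (M : Matrix κ ι R[X])
    (v : ι → R[X]) {a c : ℕ} (hM : ∀ p q, (M p q).natDegree ≤ a)
    (hv : ∀ q, (v q).natDegree + a ≤ c) (p : κ) : ((M *ᵥ v) p).natDegree ≤ c :=
  natDegree_sum_le_of_forall_le _ _ fun q _ =>
    (natDegree_mul_le (p := M p q)).trans (by have := hM p q; have := hv q; omega)

theorem exists_submatrix_det_ne_zero {K κ ι : Type*} [Field K] [Fintype ι] [DecidableEq ι]
    (E : Matrix κ ι K) (hE : Function.Injective E.mulVec) :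
    ∃ sel : ι → κ, (E.submatrix sel id).det ≠ 0 := by
  have hspan : Submodule.span K (Set.range E.row) = ⊤ := by
    by_contra hne
    obtain ⟨f, hf, hle⟩ := Submodule.exists_le_ker_of_lt_top _ (lt_top_iff_ne_top.2 hne)
    set u : ι → K := fun i => f fun j => if i = j then 1 else 0
    have hu : E *ᵥ u = E *ᵥ 0 := funext fun p => by
      have := hle (Submodule.subset_span ⟨p, rfl⟩)
      rw [LinearMap.mem_ker, f.pi_apply_eq_sum_univ] at this
      simpa [mulVec, dotProduct, u] using this
    have hu0 : u = 0 := hE hu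
    refine hf (LinearMap.ext fun x => ?_)
    rw [f.pi_apply_eq_sum_univ]
    exact Finset.sum_eq_zero fun i _ => by
      rw [show f _ = u i from rfl, hu0, Pi.zero_apply, smul_zero]
  obtain ⟨κ', a, -, hspan', hli⟩ := exists_linearIndependent' K E.row
  let eqv := (Pi.basisFun K ι).indexEquiv (Module.Basis.mk hli (by rw [hspan', hspan]))
  refine ⟨a ∘ eqv, fun h => ?_⟩
  have : LinearIndependent K (E.submatrix (a ∘ eqv) id).row := hli.comp eqv eqv.injective
  exact ((isUnit_iff_isUnit_det _).1 (linearIndependent_rows_iff_isUnit.1 this)).ne_zero h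

theorem IsUpperTriangular.eq_zero_of_degree_vecMul_lt {R ι : Type*} [CommRing R]
    [NoZeroDivisors R] [Fintype ι] [LinearOrder ι] {H : Matrix ι ι R[X]}
    (hH : H.IsUpperTriangular) {c : ι → R[X]}
    (hc : ∀ j, ((c ᵥ* H) j).degree < (H j j).degree) : c = 0 := by
  funext j
  induction j using WellFoundedLT.induction with
  | _ j ih =>
    have hcj : (c ᵥ* H) j = c j * H j j := by
      refine Finset.sum_eq_single j (fun l _ hlj => ?_) (by simp)
      change c l * H l j = 0
      rcases hlj.lt_or_gt with h | h
      · rw [ih l h, Pi.zero_apply, zero_mul]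
      · rw [hH h, mul_zero]
    by_contra hne
    have := degree_le_mul_left (H j j) hne
    rw [mul_comm, ← hcj] at this
    exact (hc j).not_ge this

end Matrix

/-- Applied to the coefficient vector of a row `v` of polynomials of degree `< m`, row `(j, k)`
of `coeffMatrix B m` gives the coefficient of `X ^ k` in `(v ᵥ* B) j`. -/
noncomputable def coeffMatrix {R ι' ι : Type*} [Semiring R] (B : Matrix ι' ι R[X]) (m : ℕ) :
    Matrix (ι × ℕ) (ι' × Fin m) R :=
  fun p q => (X ^ (q.2 : ℕ) * B q.1 p.1).coeff p.2

section coeffMatrix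

variable {R ι' ι : Type*}

theorem coeffMatrix_mulVec [CommSemiring R] [DecidableEq R] [Fintype ι'] (B : Matrix ι' ι R[X])
    (m : ℕ) (u : ι' × Fin m → R) (p : ι × ℕ) :
    (coeffMatrix B m *ᵥ u) p = (((fun l => ofFn m fun a => u (l, a)) ᵥ* B) p.1).coeff p.2 := by
  simp only [Matrix.mulVec, dotProduct, Matrix.vecMul, finsetSum_coeff, Fintype.sum_prod_type,
    ofFn_eq_sum_monomial, Finset.sum_mul]
  refine Finset.sum_congr rfl fun l _ => Finset.sum_congr rfl fun a _ => ?_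
  rw [← C_mul_X_pow_eq_monomial, mul_assoc, coeff_C_mul, coeffMatrix, mul_comm]

theorem coeffMatrix_map {S : Type*} [Semiring R] [Semiring S] (f : R →+* S)
    (B : Matrix ι' ι R[X]) (m : ℕ) :
    (coeffMatrix B m).map f = coeffMatrix (B.map (Polynomial.map f)) m := by
  ext p q
  simp [coeffMatrix, ← coeff_map]

theorem natDegree_coeffMatrix_le [Semiring R] (B : Matrix ι' ι R[X][X]) (m : ℕ) {e : ℕ}
    (hB : ∀ i j k, ((B i j).coeff k).natDegree ≤ e) (p : ι × ℕ) (q : ι' × Fin m) :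
    (coeffMatrix B m p q).natDegree ≤ e := by
  rw [coeffMatrix, coeff_X_pow_mul']
  split_ifs
  exacts [hB _ _ _, by simp]

end coeffMatrix

namespace IsHermiteNormalForm

variable {K : Type*} [Field K] {n : ℕ} {H : Matrix (Fin n) (Fin n) K[X]}

theorem isUpperTriangular (hH : IsHermiteNormalForm H) : H.IsUpperTriangular :=
  fun i j h => hH.1 i j h

theorem coeff_of_natDegree_diag_le (hH : IsHermiteNormalForm H) (i : Fin n) {j : Fin n} {k : ℕ}
    (hk : (H j j).natDegree ≤ k) :
    (H i j).coeff k = if i = j ∧ k = (H j j).natDegree then 1 else 0 := by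
  obtain ⟨-, hmonic, hred⟩ := hH
  by_cases hij : i = j
  · subst hij
    rcases hk.eq_or_lt with rfl | hlt
    · simp [(hmonic i).coeff_natDegree]
    · simp [hlt.ne', coeff_eq_zero_of_natDegree_lt hlt]
  · rw [if_neg fun h => hij h.1]
    exact coeff_eq_zero_of_degree_lt <|
      (hred i j hij (hmonic j).ne_zero).trans_le (degree_le_natDegree.trans (by exact_mod_cast hk))

variable {U B : Matrix (Fin n) (Fin n) K[X]}

theorem det_ne_zero_of_mul_eq (hH : IsHermiteNormalForm H) (hUB : U * B = H) : B.det ≠ 0 := by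
  refine right_ne_zero_of_mul (a := U.det) ?_
  rw [← det_mul, hUB, det_of_isUpperTriangular hH.isUpperTriangular]
  exact (monic_prod_of_monic _ _ fun i _ => hH.2.1 i).ne_zero

theorem natDegree_le_natDegree_det (hH : IsHermiteNormalForm H) (hU : IsUnit U.det)
    (hUB : U * B = H) (i j : Fin n) : (H i j).natDegree ≤ B.det.natDegree := by
  have hdiag : (H j j).natDegree ≤ B.det.natDegree := by
    rw [← zero_add B.det.natDegree, ← natDegree_eq_zero_of_isUnit hU,
      ← natDegree_mul hU.ne_zero (hH.det_ne_zero_of_mul_eq hUB), ← det_mul, hUB,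
      det_of_isUpperTriangular hH.isUpperTriangular,
      natDegree_prod_of_monic _ _ fun i _ => hH.2.1 i]
    exact Finset.single_le_sum (f := fun i => (H i i).natDegree) (fun _ _ => Nat.zero_le _)
      (Finset.mem_univ j)
  rcases eq_or_ne i j with rfl | hij
  · exact hdiag
  · exact (natDegree_le_natDegree (hH.2.2 i j hij (hH.2.1 j).ne_zero).le).trans hdiag

theorem injective_coeffMatrix_mulVec (hH : IsHermiteNormalForm H) (hU : IsUnit U.det)
    (hUB : U * B = H) (m : ℕ) :
    Function.Injective ((coeffMatrix B m).submatrix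
      (Subtype.val : {p : Fin n × ℕ // (H p.1 p.1).natDegree ≤ p.2} → _) id).mulVec := by
  classical
  rw [← coe_mulVecLin, injective_iff_map_eq_zero]
  intro u hu
  set v : Fin n → K[X] := fun l => ofFn m fun a => u (l, a)
  have hdeg : ∀ j, ((v ᵥ* B) j).degree < (H j j).degree := fun j => by
    rw [degree_eq_natDegree (hH.2.1 j).ne_zero, degree_lt_iff_coeff_zero]
    intro k hk
    have := congrFun hu ⟨(j, k), hk⟩
    change (coeffMatrix B m *ᵥ u) (j, k) = 0 at this
    rwa [coeffMatrix_mulVec] at this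
  have hB : B = U⁻¹ * H := by
    rw [← hUB, ← Matrix.mul_assoc, nonsing_inv_mul _ hU, Matrix.one_mul]
  have hc : v ᵥ* U⁻¹ = 0 :=
    hH.isUpperTriangular.eq_zero_of_degree_vecMul_lt (by simpa [hB, vecMul_vecMul] using hdeg)
  have hv : v = 0 := by
    rw [← vecMul_one v, ← nonsing_inv_mul U hU, ← vecMul_vecMul, hc, zero_vecMul]
  funext ⟨l, a⟩
  exact congrFun (injective_ofFn m ((congrFun hv l).trans (ofFn_zero m).symm)) a

end IsHermiteNormalForm

section

variable {F : Type*} [Field F]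

local notation "φ" => algebraMap F[X] (RatFunc F)

theorem exists_denominator_of_injective_mulVec {κ ι : Type*} [Fintype ι]
    (E : Matrix κ ι F[X]) {e : ℕ} (hE : ∀ p q, (E p q).natDegree ≤ e)
    (hinj : Function.Injective (E.map φ).mulVec) :
    ∃ Δ : F[X], Δ ≠ 0 ∧ Δ.natDegree ≤ Fintype.card ι * e ∧
      ∀ {f : ℕ} (w : κ → F[X]), (∀ p, (w p).natDegree ≤ f) →
      ∀ z, E.map φ *ᵥ z = φ ∘ w →
      ∃ N : ι → F[X], (∀ q, (N q).natDegree + e ≤ Fintype.card ι * e + f) ∧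
        φ Δ • z = φ ∘ N := by
  classical
  obtain ⟨sel, hsel⟩ := exists_submatrix_det_ne_zero _ hinj
  set M := E.submatrix sel id
  have hM : (E.map φ).submatrix sel id = M.map φ := submatrix_map _ _ _ _
  have hdet : φ M.det = (M.map φ).det := RingHom.map_det φ M
  refine ⟨M.det, fun h => hsel (by rw [hM, ← hdet, h, map_zero]),
    M.natDegree_det_le fun _ _ => hE _ _,
    fun {f} w hw z hz => ⟨M.adjugate *ᵥ (w ∘ sel), fun q => ?_, ?_⟩⟩
  · have hcard : e ≤ Fintype.card ι * e :=
      Nat.le_mul_of_pos_left e (Fintype.card_pos_iff.2 ⟨q⟩)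
    have := M.adjugate.natDegree_mulVec_le (w ∘ sel) (c := (Fintype.card ι - 1) * e + f)
      (M.natDegree_adjugate_le fun _ _ => hE _ _)
      (fun t => by have := hw (sel t); simp only [Function.comp_apply]; omega) q
    rw [Nat.sub_one_mul] at this
    omega
  · have hMz : M.map φ *ᵥ z = φ ∘ (w ∘ sel) := by
      rw [← hM]
      exact funext fun t => congrFun hz (sel t)
    calc φ M.det • z = (M.map φ).adjugate *ᵥ (M.map φ *ᵥ z) := by
          rw [mulVec_mulVec, adjugate_mul, smul_mulVec, one_mulVec, hdet]
      _ = φ ∘ (M.adjugate *ᵥ (w ∘ sel)) := by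
          rw [hMz, ← RingHom.mapMatrix_apply, ← RingHom.map_adjugate φ]
          exact funext fun t => (RingHom.map_mulVec φ _ _ t).symm

theorem exists_common_denominator_of_injective_coeffMatrix {ι' ι κ : Type*} [Fintype ι']
    (A : Matrix ι' ι F[X][X]) {e : ℕ} (hA : ∀ i j k, ((A i j).coeff k).natDegree ≤ e)
    (m : ℕ) (s : κ → ι × ℕ)
    (hinj : Function.Injective ((coeffMatrix (A.map (map φ)) m).submatrix s id).mulVec) :
    ∃ Δ : F[X], Δ ≠ 0 ∧ Δ.natDegree ≤ Fintype.card ι' * m * e ∧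
      ∀ (u : ι' × Fin m → RatFunc F) (w : κ → F[X]), (∀ p, (w p).natDegree = 0) →
        (coeffMatrix (A.map (map φ)) m *ᵥ u) ∘ s = φ ∘ w →
        (∀ q, ∃ P : F[X], P.natDegree ≤ Fintype.card ι' * m * e ∧ φ Δ * u q = φ P) ∧
        (∀ p, ∃ P : F[X], P.natDegree ≤ Fintype.card ι' * m * e ∧
          φ Δ * (coeffMatrix (A.map (map φ)) m *ᵥ u) p = φ P) := by
  have hC := natDegree_coeffMatrix_le A m hA
  rw [← coeffMatrix_map] at hinj ⊢
  obtain ⟨Δ, hΔ, hΔdeg, hsol⟩ := exists_denominator_of_injective_mulVec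
    ((coeffMatrix A m).submatrix s id) (fun p q => hC _ _) (by rwa [← submatrix_map])
  rw [Fintype.card_prod, Fintype.card_fin] at hΔdeg hsol
  refine ⟨Δ, hΔ, hΔdeg, fun u w hw hu => ?_⟩
  obtain ⟨N, hNdeg, hN⟩ := hsol w (fun p => (hw p).le) u (by rw [← submatrix_map]; exact hu)
  refine ⟨fun q => ⟨N q, by linarith [hNdeg q], congrFun hN q⟩, fun p => ?_⟩
  refine ⟨(coeffMatrix A m *ᵥ N) p, ?_, ?_⟩
  · exact (coeffMatrix A m).natDegree_mulVec_le N hC (fun q => hNdeg q) p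
  · rw [RingHom.map_mulVec φ, ← hN, ← smul_eq_mul, ← Pi.smul_apply, ← mulVec_smul]

theorem IsHermiteNormalForm.exists_common_denominator {n d e : ℕ}
    {A : Matrix (Fin n) (Fin n) F[X][X]} (hAx : ∀ i j, (A i j).natDegree ≤ d)
    (hAy : ∀ i j k, ((A i j).coeff k).natDegree ≤ e)
    {U H : Matrix (Fin n) (Fin n) (RatFunc F)[X]}
    (hU : IsUnit U.det) (hUA : U * A.map (map φ) = H) (hH : IsHermiteNormalForm H) :
    ∃ Δ : F[X], Δ ≠ 0 ∧ Δ.natDegree ≤ n * ((n - 1) * d + 1) * e ∧ ∀ i j k,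
      (∃ P : F[X], P.natDegree ≤ n * ((n - 1) * d + 1) * e ∧
        φ Δ * (U i j).coeff k = φ P) ∧
      (∃ P : F[X], P.natDegree ≤ n * ((n - 1) * d + 1) * e ∧
        φ Δ * (H i j).coeff k = φ P) := by
  classical
  set m := (n - 1) * d + 1
  obtain ⟨Δ, hΔ, hΔdeg, hsol⟩ := exists_common_denominator_of_injective_coeffMatrix A hAy m
    Subtype.val (hH.injective_coeffMatrix_mulVec hU hUA m)
  set B := A.map (map φ)
  have hBd : ∀ i j, (B i j).natDegree ≤ d := fun i j => natDegree_map_le.trans (hAx i j)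
  have hUm : ∀ i j, (U i j).natDegree < m := fun i j => Nat.lt_succ_of_le <| by
    simpa using natDegree_apply_le_of_mul_eq hUA (hH.det_ne_zero_of_mul_eq hUA) hBd
      (hH.natDegree_le_natDegree_det hU hUA) i j
  rw [Fintype.card_fin] at hΔdeg hsol
  refine ⟨Δ, hΔ, hΔdeg, fun i j k => ?_⟩
  set u : Fin n × Fin m → RatFunc F := fun q => (U i q.1).coeff q.2
  have hrow : coeffMatrix B m *ᵥ u = fun p => (H i p.1).coeff p.2 := by
    funext p
    rw [coeffMatrix_mulVec, ← hUA]
    congr 2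
    exact funext fun l => ofFn_comp_toFn_eq_id_of_natDegree_lt (hUm i l)
  obtain ⟨hUrep, hHrep⟩ := hsol u
    (fun p => if i = p.1.1 ∧ p.1.2 = (H p.1.1 p.1.1).natDegree then 1 else 0)
    (fun p => by split_ifs <;> simp) (by
      rw [hrow]
      funext p
      simp [hH.coeff_of_natDegree_diag_le i p.2])
  refine ⟨?_, by simpa [hrow] using hHrep (j, k)⟩
  by_cases hk : k < m
  · exact hUrep (j, ⟨k, hk⟩)
  · refine ⟨0, by simp, ?_⟩
    rw [coeff_eq_zero_of_natDegree_lt ((hUm i j).trans_le (not_lt.1 hk)), mul_zero, map_zero]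

theorem RatFunc.natDegree_num_le_and_denom_dvd {Δ P : F[X]} (hΔ : Δ ≠ 0)
    {c : RatFunc F} (hc : φ Δ * c = φ P) :
    c.num.natDegree ≤ P.natDegree ∧ c.denom ∣ Δ := by
  have hΔ' : φ Δ ≠ 0 := by simpa using hΔ
  obtain rfl : c = φ P / φ Δ := by rw [eq_div_iff hΔ', mul_comm, hc]
  refine ⟨?_, RatFunc.denom_div_dvd P Δ⟩
  rcases eq_or_ne P 0 with rfl | hP
  · simp
  · exact natDegree_le_of_dvd (RatFunc.num_div_dvd P hΔ) hP

end

theorem hermite_parametric_coefficient_degree_bounds_general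
    {F : Type*} [Field F] {n : ℕ} (d e : ℕ) (hd : 1 ≤ d)
    (A : Matrix (Fin n) (Fin n) (Polynomial (Polynomial F)))
    (hAx : ∀ i j, (A i j).natDegree ≤ d)
    (hAy : ∀ i j k, ((A i j).coeff k).natDegree ≤ e)
    (U H : Matrix (Fin n) (Fin n) (Polynomial (RatFunc F)))
    (hU : IsUnit U.det)
    (hUA : H = U * A.map (fun a => a.map (algebraMap (Polynomial F) (RatFunc F))))
    (hHermite : IsHermiteNormalForm H) :
    (∀ i j k, ((H i j).coeff k).num.natDegree ≤ n ^ 2 * d * e ∧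
              ((H i j).coeff k).denom.natDegree ≤ n ^ 2 * d * e) ∧
    (∀ i j k, ((U i j).coeff k).num.natDegree ≤ n ^ 2 * d * e ∧
              ((U i j).coeff k).denom.natDegree ≤ n ^ 2 * d * e) ∧
    (∃ Δ : Polynomial F, Δ ≠ 0 ∧ Δ.natDegree ≤ n ^ 2 * d * e ∧
      (∀ i j k, ((H i j).coeff k).denom ∣ Δ ∧ ((U i j).coeff k).denom ∣ Δ)) := by
  have hsize : n * ((n - 1) * d + 1) * e ≤ n ^ 2 * d * e := by
    refine Nat.mul_le_mul_right e ?_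
    rcases n with _ | n
    · simp
    · simp only [Nat.add_sub_cancel]
      nlinarith
  obtain ⟨Δ, hΔ, hΔdeg, hrep⟩ := hHermite.exists_common_denominator hAx hAy hU hUA.symm
  have bounds : ∀ c : RatFunc F, (∃ P : F[X], P.natDegree ≤ n * ((n - 1) * d + 1) * e ∧
      algebraMap F[X] (RatFunc F) Δ * c = algebraMap F[X] (RatFunc F) P) →
      (c.num.natDegree ≤ n ^ 2 * d * e ∧ c.denom.natDegree ≤ n ^ 2 * d * e) ∧
        c.denom ∣ Δ := by
    rintro c ⟨P, hP, hc⟩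
    obtain ⟨hnum, hdvd⟩ := RatFunc.natDegree_num_le_and_denom_dvd hΔ hc
    exact ⟨⟨by omega, (natDegree_le_of_dvd hdvd hΔ).trans (hΔdeg.trans hsize)⟩, hdvd⟩
  refine ⟨fun i j k => (bounds _ (hrep i j k).2).1, fun i j k => (bounds _ (hrep i j k).1).1,
    Δ, hΔ, hΔdeg.trans hsize,
    fun i j k => ⟨(bounds _ (hrep i j k).2).2, (bounds _ (hrep i j k).1).2⟩⟩

/-- Coefficient degree bounds (in the parameter `y`) for the Hermite normal form over
`F(y)[x]` of a nonsingular matrix with entries in `F[y][x]` of degree at most `d` in `x`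
and at most `e` in `y`.  An entry of `F[y][x] = (F[y])[x]` is lifted to `F(y)[x]` by
mapping its coefficients through `F[y] → F(y)`.  Every coefficient (an element of
`F(y)` in lowest terms) of every entry of `H` and of the unimodular cofactor `U` has
numerator and denominator of degree at most `n²·d·e`, and there is a common denominator
`Δ` (hence also the lcm of all denominators) of degree at most `n²·d·e`. -/
theorem hermite_parametric_coefficient_degree_bounds
    {F : Type*} [Field F] {n : ℕ} (d e : ℕ) (hd : 1 ≤ d)
    (A : Matrix (Fin n) (Fin n) (Polynomial (Polynomial F)))
    (hAdet : A.det ≠ 0)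
    (hAx : ∀ i j, (A i j).natDegree ≤ d)
    (hAy : ∀ i j k, ((A i j).coeff k).natDegree ≤ e)
    (U H : Matrix (Fin n) (Fin n) (Polynomial (RatFunc F)))
    (hU : IsUnit U.det)
    (hUA : H = U * A.map (fun a => a.map (algebraMap (Polynomial F) (RatFunc F))))
    (hHermite : IsHermiteNormalForm H) :
    (∀ i j k, ((H i j).coeff k).num.natDegree ≤ n ^ 2 * d * e ∧
              ((H i j).coeff k).denom.natDegree ≤ n ^ 2 * d * e) ∧
    (∀ i j k, ((U i j).coeff k).num.natDegree ≤ n ^ 2 * d * e ∧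
              ((U i j).coeff k).denom.natDegree ≤ n ^ 2 * d * e) ∧
    (∃ Δ : Polynomial F, Δ ≠ 0 ∧ Δ.natDegree ≤ n ^ 2 * d * e ∧
      (∀ i j k, ((H i j).coeff k).denom ∣ Δ ∧ ((U i j).coeff k).denom ∣ Δ)) :=
  hermite_parametric_coefficient_degree_bounds_general d e hd A hAx hAy U H hU hUA hHermite
end

section
/- For every nonzero complex number a, the matrix exponential of the 2×2 complex matrix X_D = [[log a + 2πi, a⁻¹], [0, log a − 2πi]] equals the diagonal matrix [[a, 0], [0, a]] (that is, a times the identity), where log denotes the principal branch of the complex logarithm. In particular exp(X_D) = B where B = a·I, and not the matrix [[a,1],[0,a]]. -/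
/-!
The eigenvalues `log a ± 2πi` of `X_D` are distinct, so `X_D` is diagonalizable, and both
exponentiate to `a`. In general `exp [[l, b], [0, m]]` has off-diagonal entry
`b (eᵐ - eˡ) / (m - l)`, which vanishes as soon as `eˡ = eᵐ`.
-/

open NormedSpace

namespace Matrix

section Field

variable {𝕂 : Type*} [Field 𝕂]

theorem fin_two_conj_diagonal {l m : 𝕂} (b : 𝕂) (hlm : l ≠ m) (x y : 𝕂) :
    !![1, b; 0, m - l] * diagonal ![x, y] * (!![1, b; 0, m - l])⁻¹ =
      !![x, b * (y - x) / (m - l); 0, y] := by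
  have hml : m - l ≠ 0 := sub_ne_zero.mpr hlm.symm
  have hdet : IsUnit (!![1, b; 0, m - l]).det := by simpa [det_fin_two_of] using hml
  calc _ = !![x, b * (y - x) / (m - l); 0, y] * !![1, b; 0, m - l] *
          (!![1, b; 0, m - l])⁻¹ := by
        congr 1
        ext i j
        fin_cases i <;> fin_cases j <;> simp [field]
    _ = _ := mul_nonsing_inv_cancel_right _ _ hdet

theorem fin_two_upperTriangular_eq_conj_diagonal {l m : 𝕂} (b : 𝕂) (hlm : l ≠ m) :
    !![l, b; 0, m] = !![1, b; 0, m - l] * diagonal ![l, m] * (!![1, b; 0, m - l])⁻¹ := by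
  rw [fin_two_conj_diagonal b hlm, mul_div_cancel_right₀ b (sub_ne_zero.mpr hlm.symm)]

end Field

variable {𝕂 : Type*} [NormedField 𝕂] [NormedAlgebra ℚ 𝕂] [CompleteSpace 𝕂]

theorem exp_fin_two_upperTriangular {l m : 𝕂} (b : 𝕂) (hlm : l ≠ m) :
    exp !![l, b; 0, m] = !![exp l, b * (exp m - exp l) / (m - l); 0, exp m] := by
  have hP : IsUnit !![1, b; 0, m - l] := by
    rw [isUnit_iff_isUnit_det, det_fin_two_of]
    simpa using sub_ne_zero.mpr hlm.symm
  have hexp : exp ![l, m] = ![exp l, exp m] := by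
    ext i; fin_cases i <;> simp
  rw [fin_two_upperTriangular_eq_conj_diagonal b hlm, exp_conj _ _ hP, exp_diagonal, hexp,
    fin_two_conj_diagonal b hlm]

theorem exp_fin_two_upperTriangular_of_exp_eq {l m : 𝕂} (b : 𝕂) (hlm : l ≠ m)
    (hexp : exp l = exp m) : exp !![l, b; 0, m] = !![exp l, 0; 0, exp m] := by
  rw [exp_fin_two_upperTriangular b hlm, hexp, sub_self, mul_zero, zero_div]

end Matrix

/-- The matrix exponential of the nonprimary logarithm
`X_D = [[log a + 2πi, a⁻¹], [0, log a − 2πi]]` is the diagonal matrix `a·I = [[a, 0], [0, a]]`,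
for every nonzero complex number `a` — and not the matrix `[[a, 1], [0, a]]`.  Here `log`
is the principal branch of the complex logarithm. -/
theorem exp_nonprimary_log_is_scalar (a : ℂ) (ha : a ≠ 0) :
    NormedSpace.exp
        (!![Complex.log a + 2 * Real.pi * Complex.I, a⁻¹;
            0, Complex.log a - 2 * Real.pi * Complex.I]) = !![a, 0; 0, a] ∧
    NormedSpace.exp
        (!![Complex.log a + 2 * Real.pi * Complex.I, a⁻¹;
            0, Complex.log a - 2 * Real.pi * Complex.I])
      = a • (1 : Matrix (Fin 2) (Fin 2) ℂ) ∧
    NormedSpace.exp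
        (!![Complex.log a + 2 * Real.pi * Complex.I, a⁻¹;
            0, Complex.log a - 2 * Real.pi * Complex.I]) ≠ !![a, 1; 0, a] := by
  have hne :
      Complex.log a + 2 * Real.pi * Complex.I ≠ Complex.log a - 2 * Real.pi * Complex.I := by
    intro h
    have h4 : (4 * Real.pi * Complex.I : ℂ) = 0 := by linear_combination h
    simp [Complex.I_ne_zero, Real.pi_ne_zero] at h4
  have hexp_add : exp (Complex.log a + 2 * Real.pi * Complex.I) = a := by
    rw [← Complex.exp_eq_exp_ℂ, Complex.exp_add, Complex.exp_log ha,
      Complex.exp_two_pi_mul_I, mul_one]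
  have hexp_sub : exp (Complex.log a - 2 * Real.pi * Complex.I) = a := by
    rw [← Complex.exp_eq_exp_ℂ, Complex.exp_sub, Complex.exp_log ha,
      Complex.exp_two_pi_mul_I, div_one]
  have hscalar : exp !![Complex.log a + 2 * Real.pi * Complex.I, a⁻¹;
      0, Complex.log a - 2 * Real.pi * Complex.I] = !![a, 0; 0, a] := by
    rw [Matrix.exp_fin_two_upperTriangular_of_exp_eq _ hne (hexp_add.trans hexp_sub.symm),
      hexp_add, hexp_sub]
  refine ⟨hscalar, ?_, ?_⟩
  · rw [hscalar, Matrix.smul_one_eq_diagonal, Matrix.diagonal_fin_two]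
  · rw [hscalar]
    intro h
    simpa using congr_fun (congr_fun h 0) 1
end
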